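/- Let n ≥ 1, let H: ℝ^{2n} → ℝ be smooth, and let X_H(q,p) = (∂H/∂p (q,p), −∂H/∂q (q,p)) be the canonical Hamiltonian vector field on ℝ^{2n}. Fix h ∈ ℝ, let V ⊆ ℝ^{2n} be open, and suppose y: V → ℝ^{2n} is smooth and satisfies y(x) = x + (h/2)·X_H(y(x)) for every x ∈ V (half-step implicit Euler). Define φ(x) = y(x) + (h/2)·X_H(y(x)) (followed by half-step explicit Euler). Then φ is a symplectic map: for every x ∈ V, Dφ(x)ᵀ · J · Dφ(x) = J, where J is the canonical symplectic 2n×2n matrix with block form J = [[0, −I],[I, 0]] and Dφ(x) is the Jacobian of φ at x. -/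

import Mathlib

open Matrix
open scoped BigOperators

/-- The canonical Hamiltonian vector field `X_H = (∂H/∂p, −∂H/∂q)` on
`ℝ^{2n} = ℝⁿ × ℝⁿ` with coordinates `(q,p)`. -/
noncomputable def hamVF {n : ℕ} (H : (Fin n → ℝ) × (Fin n → ℝ) → ℝ)
    (z : (Fin n → ℝ) × (Fin n → ℝ)) : (Fin n → ℝ) × (Fin n → ℝ) :=
  (fun i => fderiv ℝ H z (0, Pi.single i 1),
   fun i => -fderiv ℝ H z (Pi.single i 1, 0))

/-- Standard basis vectors of `ℝⁿ × ℝⁿ` indexed by `Fin n ⊕ Fin n`. -/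
def basisVec {n : ℕ} : (Fin n ⊕ Fin n) → (Fin n → ℝ) × (Fin n → ℝ)
  | Sum.inl i => (Pi.single i 1, 0)
  | Sum.inr i => (0, Pi.single i 1)

/-- Coordinates of a point of `ℝⁿ × ℝⁿ` indexed by `Fin n ⊕ Fin n`. -/
def coord {n : ℕ} (z : (Fin n → ℝ) × (Fin n → ℝ)) : (Fin n ⊕ Fin n) → ℝ
  | Sum.inl i => z.1 i
  | Sum.inr i => z.2 i

/-- Jacobian matrix of a map `ℝ^{2n} → ℝ^{2n}`. -/
noncomputable def jacP {n : ℕ}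
    (φ : (Fin n → ℝ) × (Fin n → ℝ) → (Fin n → ℝ) × (Fin n → ℝ))
    (x : (Fin n → ℝ) × (Fin n → ℝ)) :
    Matrix (Fin n ⊕ Fin n) (Fin n ⊕ Fin n) ℝ :=
  Matrix.of fun i j => fderiv ℝ (fun z => coord (φ z) i) x (basisVec j)

/-- The canonical symplectic matrix `J = [[0, −I], [I, 0]]`. -/
def sympJ (n : ℕ) : Matrix (Fin n ⊕ Fin n) (Fin n ⊕ Fin n) ℝ :=
  Matrix.fromBlocks 0 (-1) 1 0

/-!
Put `A = (h/2)·DX_H(y(x)) = (h/2)·(-J)·Hess H(y(x))`. Differentiating the implicit half-step gives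
`(1 - A)·Dy(x) = 1`, and the explicit one `Dφ(x) = (1 + A)·Dy(x)`, so `Dφ(x)` is the Cayley
transform of `A`. The Hessian is symmetric, so `A` is skew-adjoint for `J`
(`AᵀJ = -JA`); then `(1 + A)ᵀJ(1 + A) = J + AᵀJA = (1 - A)ᵀJ(1 - A)`, and hence
`Dφᵀ J Dφ = Dyᵀ (1 - A)ᵀ J (1 - A) Dy = J`.
-/

noncomputable def phaseBasis (n : ℕ) :
    Module.Basis (Fin n ⊕ Fin n) ℝ ((Fin n → ℝ) × (Fin n → ℝ)) :=
  (Pi.basisFun ℝ (Fin n)).prod (Pi.basisFun ℝ (Fin n))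

noncomputable def coordCLM {n : ℕ} :
    Fin n ⊕ Fin n → ((Fin n → ℝ) × (Fin n → ℝ)) →L[ℝ] ℝ
  | Sum.inl i => (ContinuousLinearMap.proj i).comp (ContinuousLinearMap.fst ℝ _ _)
  | Sum.inr i => (ContinuousLinearMap.proj i).comp (ContinuousLinearMap.snd ℝ _ _)

/-- Entry `(k, l)` is `∂ₗ∂ₖH(z)`, making this the Jacobian matrix of the gradient of `H`. -/
noncomputable def hessian {n : ℕ} (H : (Fin n → ℝ) × (Fin n → ℝ) → ℝ)
    (z : (Fin n → ℝ) × (Fin n → ℝ)) : Matrix (Fin n ⊕ Fin n) (Fin n ⊕ Fin n) ℝ :=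
  Matrix.of fun k l => fderiv ℝ (fderiv ℝ H) z (basisVec l) (basisVec k)

section Jacobian

variable {n : ℕ} {f g : (Fin n → ℝ) × (Fin n → ℝ) → (Fin n → ℝ) × (Fin n → ℝ)}
  {x : (Fin n → ℝ) × (Fin n → ℝ)}

lemma phaseBasis_apply (k : Fin n ⊕ Fin n) : phaseBasis n k = basisVec k := by
  rcases k with i | i <;> ext <;> simp [phaseBasis, basisVec]

lemma phaseBasis_repr_apply (z : (Fin n → ℝ) × (Fin n → ℝ)) (k : Fin n ⊕ Fin n) :
    (phaseBasis n).repr z k = coord z k := by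
  rcases k with i | i <;> simp [phaseBasis, coord]

lemma coordCLM_apply (k : Fin n ⊕ Fin n) (z : (Fin n → ℝ) × (Fin n → ℝ)) :
    coordCLM k z = coord z k := by
  rcases k with i | i <;> rfl

lemma fderiv_coord_apply (hf : DifferentiableAt ℝ f x) (k : Fin n ⊕ Fin n)
    (v : (Fin n → ℝ) × (Fin n → ℝ)) :
    fderiv ℝ (fun z => coord (f z) k) x v = coord (fderiv ℝ f x v) k := by
  simp only [← coordCLM_apply]
  exact DFunLike.congr_fun ((coordCLM k).hasFDerivAt.comp x hf.hasFDerivAt).fderiv v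

lemma jacP_eq_toMatrix (hf : DifferentiableAt ℝ f x) :
    jacP f x = LinearMap.toMatrix (phaseBasis n) (phaseBasis n) (fderiv ℝ f x) := by
  ext i j
  rw [jacP, of_apply, LinearMap.toMatrix_apply, fderiv_coord_apply hf, phaseBasis_apply,
    phaseBasis_repr_apply]
  rfl

lemma jacP_id (x : (Fin n → ℝ) × (Fin n → ℝ)) : jacP id x = 1 := by
  rw [jacP_eq_toMatrix differentiableAt_id, fderiv_id, ContinuousLinearMap.coe_id,
    LinearMap.toMatrix_id]

lemma jacP_comp (hf : DifferentiableAt ℝ f (g x)) (hg : DifferentiableAt ℝ g x) :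
    jacP (fun z => f (g z)) x = jacP f (g x) * jacP g x := by
  rw [jacP_eq_toMatrix (f := fun z => f (g z)) (hf.comp x hg), fderiv_fun_comp x hf hg,
    jacP_eq_toMatrix hf, jacP_eq_toMatrix hg, ContinuousLinearMap.toLinearMap_comp,
    LinearMap.toMatrix_comp _ (phaseBasis n)]

lemma jacP_add_smul (c : ℝ) (hf : DifferentiableAt ℝ f x) (hg : DifferentiableAt ℝ g x) :
    jacP (fun z => f z + c • g z) x = jacP f x + c • jacP g x := by
  rw [jacP_eq_toMatrix (f := fun z => f z + c • g z) (hf.add (hg.const_smul c)),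
    fderiv_fun_add hf (hg.fun_const_smul c), fderiv_fun_const_smul hg, jacP_eq_toMatrix hf,
    jacP_eq_toMatrix hg]
  simp only [ContinuousLinearMap.toLinearMap_add, ContinuousLinearMap.toLinearMap_smul, map_add,
    map_smul]

lemma jacP_congr (hfg : f =ᶠ[nhds x] g) : jacP f x = jacP g x := by
  ext i j
  exact DFunLike.congr_fun (hfg.fun_comp (coord · i)).fderiv_eq (basisVec j)

end Jacobian

section Hamiltonian

variable {n : ℕ} {H : (Fin n → ℝ) × (Fin n → ℝ) → ℝ}
  {z : (Fin n → ℝ) × (Fin n → ℝ)}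

lemma differentiableAt_hamVF (hH : DifferentiableAt ℝ (fderiv ℝ H) z) :
    DifferentiableAt ℝ (hamVF H) z :=
  (differentiableAt_pi.2 fun _ => hH.clm_apply (differentiableAt_const _)).prodMk
    (differentiableAt_pi.2 fun _ => (hH.clm_apply (differentiableAt_const _)).neg)

lemma jacP_hamVF (hH : DifferentiableAt ℝ (fderiv ℝ H) z) :
    jacP (hamVF H) z = -sympJ n * hessian H z := by
  have hpartial (v u : (Fin n → ℝ) × (Fin n → ℝ)) :
      fderiv ℝ (fun w => fderiv ℝ H w v) z u = fderiv ℝ (fderiv ℝ H) z u v := by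
    rw [fderiv_clm_apply hH (differentiableAt_const v)]
    simp
  ext (i | i) j
  · change fderiv ℝ (fun w => fderiv ℝ H w (basisVec (.inr i))) z (basisVec j) = _
    simp [hpartial, hessian, sympJ, mul_apply, Fintype.sum_sum_type, one_apply]
  · change fderiv ℝ (fun w => -fderiv ℝ H w (basisVec (.inl i))) z (basisVec j) = _
    simp [fderiv_fun_neg, hpartial, hessian, sympJ, mul_apply, Fintype.sum_sum_type, one_apply]

lemma hessian_transpose (hH : ContDiffAt ℝ 2 H z) : (hessian H z)ᵀ = hessian H z := by
  ext k l
  exact hH.isSymmSndFDerivAt (by simp) _ _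

end Hamiltonian

section Cayley

variable {ι R : Type*} [Fintype ι] [DecidableEq ι] [CommRing R] {A B J : Matrix ι ι R}

lemma one_add_transpose_mul_mul_one_add (hA : J.IsSkewAdjoint A) :
    (1 + A)ᵀ * J * (1 + A) = (1 - A)ᵀ * J * (1 - A) := by
  simp only [transpose_add, transpose_sub, transpose_one, add_mul, sub_mul, mul_add, mul_sub,
    one_mul, mul_one, show Aᵀ * J = -(J * A) from hA.trans (Matrix.mul_neg J A)]
  abel

lemma transpose_mul_mul_self_eq_of_isSkewAdjoint (hA : J.IsSkewAdjoint A)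
    (hB : (1 - A) * B = 1) : ((1 + A) * B)ᵀ * J * ((1 + A) * B) = J :=
  calc ((1 + A) * B)ᵀ * J * ((1 + A) * B) = Bᵀ * ((1 + A)ᵀ * J * (1 + A)) * B := by
        simp only [transpose_mul, Matrix.mul_assoc]
    _ = ((1 - A) * B)ᵀ * J * ((1 - A) * B) := by
        rw [one_add_transpose_mul_mul_one_add hA]
        simp only [transpose_mul, Matrix.mul_assoc]
    _ = J := by rw [hB, transpose_one, Matrix.one_mul, Matrix.mul_one]

end Cayley

lemma isSkewAdjoint_J_smul_neg_J_mul {l R : Type*} [Fintype l] [DecidableEq l] [CommRing R]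
    (c : R) {S : Matrix (l ⊕ l) (l ⊕ l) R} (hS : Sᵀ = S) :
    (J l R).IsSkewAdjoint (c • (-J l R * S)) := by
  rw [Matrix.IsSkewAdjoint, Matrix.IsAdjointPair, transpose_smul, transpose_mul, transpose_neg,
    J_transpose, hS, neg_neg, Matrix.smul_mul, Matrix.mul_assoc, J_squared]
  simp [← Matrix.mul_assoc, J_squared]

theorem implicit_explicit_euler_symplectic_general
    {n : ℕ}
    (H : (Fin n → ℝ) × (Fin n → ℝ) → ℝ) (hH : ContDiff ℝ (⊤ : ℕ∞) H)
    (h : ℝ) (V : Set ((Fin n → ℝ) × (Fin n → ℝ))) (hV : IsOpen V)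
    (y : (Fin n → ℝ) × (Fin n → ℝ) → (Fin n → ℝ) × (Fin n → ℝ))
    (hy : ContDiffOn ℝ (⊤ : ℕ∞) y V)
    (hyEq : ∀ x ∈ V, y x = x + (h / 2) • hamVF H (y x))
    (φ : (Fin n → ℝ) × (Fin n → ℝ) → (Fin n → ℝ) × (Fin n → ℝ))
    (hφ : ∀ x, φ x = y x + (h / 2) • hamVF H (y x)) :
    ∀ x ∈ V, (jacP φ x)ᵀ * sympJ n * jacP φ x = sympJ n := by
  intro x hx
  have hH2 : ContDiff ℝ 2 H := hH.of_le (WithTop.coe_le_coe.2 (le_top : (2 : ℕ∞) ≤ ⊤))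
  have hD2H : DifferentiableAt ℝ (fderiv ℝ H) (y x) :=
    (hH2.fderiv_right (by norm_num)).differentiable one_ne_zero (y x)
  have hX : DifferentiableAt ℝ (hamVF H) (y x) := differentiableAt_hamVF hD2H
  have hyx : DifferentiableAt ℝ y x :=
    (hy.differentiableOn (by simp)).differentiableAt (hV.mem_nhds hx)
  set A := (h / 2) • (-sympJ n * hessian H (y x))
  have jacP_half_step {f} (hf : DifferentiableAt ℝ f x) :
      jacP (fun z => f z + (h / 2) • hamVF H (y z)) x = jacP f x + A * jacP y x := by
    rw [jacP_add_smul (g := fun z => hamVF H (y z)) _ hf (hX.comp x hyx), jacP_comp hX hyx,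
      jacP_hamVF hD2H, smul_mul]
  have hB : (1 - A) * jacP y x = 1 := by
    have hfix : jacP y x = jacP (fun z => id z + (h / 2) • hamVF H (y z)) x :=
      jacP_congr (Filter.eventually_of_mem (hV.mem_nhds hx) hyEq)
    rw [sub_mul, Matrix.one_mul, sub_eq_iff_eq_add]
    rwa [jacP_half_step differentiableAt_id, jacP_id] at hfix
  have hφx : jacP φ x = (1 + A) * jacP y x := by
    rw [funext hφ, jacP_half_step hyx, add_mul, Matrix.one_mul]
  rw [hφx]
  -- `sympJ n` is Mathlib's `Matrix.J (Fin n) ℝ` by definition.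
  exact transpose_mul_mul_self_eq_of_isSkewAdjoint
    (isSkewAdjoint_J_smul_neg_J_mul _ (hessian_transpose hH2.contDiffAt)) hB

/-- A half-step implicit Euler step followed by a half-step
explicit Euler step (sharing the intermediate point `y(x)`) for the canonical
Hamiltonian vector field `X_H` is a symplectic map: `Dφ(x)ᵀ·J·Dφ(x) = J`. -/
theorem implicit_explicit_euler_symplectic
    {n : ℕ} (hn : 1 ≤ n)
    (H : (Fin n → ℝ) × (Fin n → ℝ) → ℝ) (hH : ContDiff ℝ (⊤ : ℕ∞) H)
    (h : ℝ) (V : Set ((Fin n → ℝ) × (Fin n → ℝ))) (hV : IsOpen V)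
    (y : (Fin n → ℝ) × (Fin n → ℝ) → (Fin n → ℝ) × (Fin n → ℝ))
    (hy : ContDiffOn ℝ (⊤ : ℕ∞) y V)
    (hyEq : ∀ x ∈ V, y x = x + (h / 2) • hamVF H (y x))
    (φ : (Fin n → ℝ) × (Fin n → ℝ) → (Fin n → ℝ) × (Fin n → ℝ))
    (hφ : ∀ x, φ x = y x + (h / 2) • hamVF H (y x)) :
    ∀ x ∈ V, (jacP φ x)ᵀ * sympJ n * jacP φ x = sympJ n :=
  implicit_explicit_euler_symplectic_general H hH h V hV y hy hyEq φ hφ
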